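/- arXiv:2010.13599 — 3 statements merged into one kernel-verified Lean document; each statement's English description precedes it below -/
import Mathlib

section
/- Unbiasedness of the Horvitz–Thompson estimator (Proposition 1): Under the Bernoulli design, the expectation of the Horvitz–Thompson estimator equals the average marginalized response: E[τ̂] = τ, i.e. E[(1/(Np)) Σ_{i=1}^N Z_i μ_i(Z) − (1/(N(1−p))) Σ_{i=1}^N (1−Z_i) μ_i(Z)] = (1/N) Σ_{i=1}^N (E[μ_i^{(1)}(Z)] − E[μ_i^{(0)}(Z)]). -/
/-- Expectation with respect to the Bernoulli(p) product measure on `{0,1}^N`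
(represented as `Fin N → Bool`): each assignment vector `z` gets weight
`∏ i, (p if z i = 1 else 1 - p)`. -/
noncomputable def bexp {N : ℕ} (p : ℝ) (f : (Fin N → Bool) → ℝ) : ℝ :=
  ∑ z : Fin N → Bool, (∏ i, if z i then p else 1 - p) * f z

/-!
The Bernoulli weight of an assignment factors as the weight of its `i`-th coordinate times the
weight of the others, so `E[1{Z_i = a} f(Z)] = P(Z_i = a) E[f(Z[i:=a])]`. For `a = 1` and `a = 0`
the factors `p` and `1 - p` cancel the inverse-probability weights of the estimator, and linearity
of expectation gives the claim.
-/

open Finset Function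

section BernoulliWeight

variable {ι : Type*}

theorem update_funSplitAt_symm [DecidableEq ι] {β : Type*} (i : ι) (a b : β)
    (h : {j // j ≠ i} → β) :
    update ((Equiv.funSplitAt i β).symm (b, h)) i a = (Equiv.funSplitAt i β).symm (a, h) := by
  ext j
  rcases eq_or_ne j i with rfl | hj <;> simp [*]

variable [Fintype ι] (p : ℝ)

def bernoulliWeight (z : ι → Bool) : ℝ :=
  ∏ j, if z j then p else 1 - p

variable [DecidableEq ι]

theorem bernoulliWeight_funSplitAt_symm (i : ι) (b : Bool) (h : {j // j ≠ i} → Bool) :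
    bernoulliWeight p ((Equiv.funSplitAt i Bool).symm (b, h))
      = (if b then p else 1 - p) * bernoulliWeight p h := by
  rw [bernoulliWeight, Fintype.prod_eq_mul_prod_subtype_ne _ i]
  congr 1
  · simp
  · exact Fintype.prod_congr _ _ fun j => by simp [j.prop]

theorem sum_bernoulliWeight_mul_ite (i : ι) (a : Bool) (f : (ι → Bool) → ℝ) :
    ∑ z, bernoulliWeight p z * (if z i = a then f z else 0)
      = (if a then p else 1 - p) * ∑ z, bernoulliWeight p z * f (update z i a) := by
  set join := (Equiv.funSplitAt i Bool).symm
  have sum_split (g : (ι → Bool) → ℝ) : ∑ z, g z = ∑ b : Bool, ∑ h, g (join (b, h)) := by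
    rw [← join.sum_comp, Fintype.sum_prod_type]
  have join_apply_self (b h) : join (b, h) i = b := by simp [join]
  rw [sum_split, sum_split (fun z => bernoulliWeight p z * f (update z i a))]
  simp only [bernoulliWeight_funSplitAt_symm, join_apply_self, join, update_funSplitAt_symm,
    Fintype.sum_bool]
  cases a <;> simp [← sum_add_distrib, mul_sum, ← add_mul, mul_assoc]

end BernoulliWeight

section BernoulliExpectation

variable {N : ℕ} (p : ℝ)

theorem bexp_eq_sum_bernoulliWeight (f : (Fin N → Bool) → ℝ) :
    bexp p f = ∑ z, bernoulliWeight p z * f z :=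
  rfl

theorem bexp_sub (f g : (Fin N → Bool) → ℝ) :
    bexp p (fun z => f z - g z) = bexp p f - bexp p g := by
  simp only [bexp, mul_sub, sum_sub_distrib]

theorem bexp_const_mul (c : ℝ) (f : (Fin N → Bool) → ℝ) :
    bexp p (fun z => c * f z) = c * bexp p f := by
  simp only [bexp, mul_sum, mul_left_comm]

theorem bexp_sum {κ : Type*} (s : Finset κ) (f : κ → (Fin N → Bool) → ℝ) :
    bexp p (fun z => ∑ k ∈ s, f k z) = ∑ k ∈ s, bexp p (f k) := by
  simp only [bexp, mul_sum]
  exact sum_comm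

theorem bexp_indicator_mul (i : Fin N) (f : (Fin N → Bool) → ℝ) :
    bexp p (fun z => (if z i then 1 else 0) * f z)
      = p * bexp p (fun z => f (update z i true)) := by
  rw [bexp_eq_sum_bernoulliWeight, bexp_eq_sum_bernoulliWeight]
  simp only [ite_mul, one_mul, zero_mul]
  exact sum_bernoulliWeight_mul_ite p i true f

theorem bexp_one_sub_indicator_mul (i : Fin N) (f : (Fin N → Bool) → ℝ) :
    bexp p (fun z => (1 - if z i then 1 else 0) * f z)
      = (1 - p) * bexp p (fun z => f (update z i false)) := by
  have indicator (z : Fin N → Bool) :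
      (1 - if z i then 1 else 0) * f z = if z i = false then f z else 0 := by
    cases z i <;> simp
  rw [bexp_eq_sum_bernoulliWeight, bexp_eq_sum_bernoulliWeight]
  simp only [indicator]
  exact sum_bernoulliWeight_mul_ite p i false f

end BernoulliExpectation

theorem horvitz_thompson_unbiased_general (N : ℕ) (p : ℝ) (hp0 : 0 < p) (hp1 : p < 1)
    (μ : Fin N → (Fin N → Bool) → ℝ) :
    bexp p (fun z =>
        (1 / (N * p)) * ∑ i, (if z i then (1 : ℝ) else 0) * μ i z
          - (1 / (N * (1 - p))) * ∑ i, (1 - if z i then (1 : ℝ) else 0) * μ i z)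
      = (1 / N) * ∑ i,
          (bexp p (fun z => μ i (Function.update z i true))
            - bexp p (fun z => μ i (Function.update z i false))) := by
  have hp : p ≠ 0 := hp0.ne'
  have hq : 1 - p ≠ 0 := sub_ne_zero.mpr hp1.ne'
  rw [bexp_sub, bexp_const_mul, bexp_const_mul, bexp_sum, bexp_sum]
  simp only [bexp_indicator_mul, bexp_one_sub_indicator_mul, ← mul_sum, sum_sub_distrib]
  field_simp

/-- Proposition 1 (unbiasedness of the Horvitz–Thompson estimator):
under the Bernoulli design,
`E[(1/(Np)) Σ_i Z_i μ_i(Z) − (1/(N(1−p))) Σ_i (1−Z_i) μ_i(Z)]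
  = (1/N) Σ_i (E[μ_i(Z[i:=1])] − E[μ_i(Z[i:=0])])`. -/
theorem horvitz_thompson_unbiased (N : ℕ) (hN : 1 ≤ N) (p : ℝ) (hp0 : 0 < p) (hp1 : p < 1)
    (μ : Fin N → (Fin N → Bool) → ℝ) :
    bexp p (fun z =>
        (1 / (N * p)) * ∑ i, (if z i then (1 : ℝ) else 0) * μ i z
          - (1 / (N * (1 - p))) * ∑ i, (1 - if z i then (1 : ℝ) else 0) * μ i z)
      = (1 / N) * ∑ i,
          (bexp p (fun z => μ i (Function.update z i true))
            - bexp p (fun z => μ i (Function.update z i false))) :=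
  horvitz_thompson_unbiased_general N p hp0 hp1 μ
end

section
/- Homophily identity and variance domination (Lemma 4): Write μ̄^a = (1/N) Σ_{i=1}^N E[μ_i^{(a)}(Z)] for a ∈ {0,1}, τ_i = E[μ_i^{(1)}(Z)] − E[μ_i^{(0)}(Z)], and τ̄ = (1/N) Σ_{i=1}^N τ_i. Then for any map B assigning to each i a set B(i) ⊆ {1,…,N}, the exact identity (1/N) Σ_{i=1}^N Σ_{j∈B(i)} Σ_{a∈{0,1}} Σ_{b∈{0,1}} (−1)^{a+b} (E[μ_i^{(a)}(Z)] − μ̄^a)(E[μ_j^{(b)}(Z)] − μ̄^b) = (1/N) Σ_{i=1}^N (τ_i − τ̄) Σ_{j∈B(i)} (τ_j − τ̄) holds. Consequently, if the homophily condition (1/N) Σ_{i=1}^N (τ_i − τ̄) Σ_{j∈B(i)} (τ_j − τ̄) ≥ 0 holds, then Σ_{i=1}^N Σ_{j∈B(i)} Σ_{a,b∈{0,1}} (−1)^{a+b} Cov[μ_i^{(a)}(Z), μ_j^{(b)}(Z)] ≤ Σ_{i=1}^N Σ_{j∈B(i)} Σ_{a,b∈{0,1}} (−1)^{a+b} E[(μ_i^{(a)}(Z)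 − μ̄^a)(μ_j^{(b)}(Z) − μ̄^b)]. -/
/-- Covariance under the Bernoulli(p) product measure. -/
noncomputable def bcov {N : ℕ} (p : ℝ) (f g : (Fin N → Bool) → ℝ) : ℝ :=
  bexp p (fun z => f z * g z) - bexp p f * bexp p g

/-- `(−1)^a` for `a ∈ {0,1}` (with `true ↦ −1`, `false ↦ 1`). -/
def sgn (a : Bool) : ℝ := if a then -1 else 1

/-!
Expanding `E[(X - c)(Y - d)] = Cov(X, Y) + (E X - c)(E Y - d)` splits the right-hand side of the
domination inequality into the covariance side plus the signed sum of products of centred means.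
Since `∑_{a,b} (-1)^(a+b) u_a v_b = (u_1 - u_0)(v_1 - v_0)` and `μ̄^1 - μ̄^0 = τ̄`, that signed sum
factors as `(τ_i - τ̄)(τ_j - τ̄)`, which gives the identity, and summing over `j ∈ B(i)` and `i`
gives `N` times the homophily quantity, which is nonnegative by assumption.
-/

open Finset

theorem sum_prod_bernoulli_weight (ι : Type*) [Fintype ι] [DecidableEq ι] (p : ℝ) :
    ∑ z : ι → Bool, ∏ i, (if z i then p else 1 - p) = 1 := by
  simpa using (Fintype.prod_sum fun (_ : ι) (b : Bool) => if b then p else 1 - p).symm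

theorem bexp_sub_mul_sub {N : ℕ} (p c d : ℝ) (f g : (Fin N → Bool) → ℝ) :
    bexp p (fun z => (f z - c) * (g z - d))
      = bcov p f g + (bexp p f - c) * (bexp p g - d) := by
  set w : (Fin N → Bool) → ℝ := fun z => ∏ i, if z i then p else 1 - p
  have hw : ∑ z, w z = 1 := sum_prod_bernoulli_weight (Fin N) p
  have hexpand : bexp p (fun z => (f z - c) * (g z - d))
      = bexp p (fun z => f z * g z) - c * bexp p g - d * bexp p f + c * d := by
    calc bexp p (fun z => (f z - c) * (g z - d))
        = ∑ z, (w z * (f z * g z) - c * (w z * g z) - d * (w z * f z) + c * d * w z) :=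
          sum_congr rfl fun z _ => by ring
      _ = _ := by simp only [sum_add_distrib, sum_sub_distrib, ← mul_sum, hw, mul_one]; rfl
  rw [hexpand, bcov]
  ring

theorem sum_sgn_mul_sgn_mul (u v : Bool → ℝ) :
    ∑ a : Bool, ∑ b : Bool, sgn a * sgn b * (u a * v b)
      = (u true - u false) * (v true - v false) := by
  simp only [Fintype.sum_bool, sgn, if_true, Bool.false_eq_true, if_false]
  ring

theorem homophily_identity_and_domination_general
    (N : ℕ) (hN : 1 ≤ N) (p : ℝ)
    (μ : Fin N → (Fin N → Bool) → ℝ) (B : Fin N → Finset (Fin N))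
    (mubar : Bool → ℝ)
    (hmubar : ∀ a : Bool,
      mubar a = (1 / N) * ∑ i, bexp p (fun z => μ i (Function.update z i a)))
    (τ : Fin N → ℝ)
    (hτ : ∀ i, τ i = bexp p (fun z => μ i (Function.update z i true))
        - bexp p (fun z => μ i (Function.update z i false)))
    (τbar : ℝ) (hτbar : τbar = (1 / N) * ∑ i, τ i) :
    ((1 / N) * ∑ i, ∑ j ∈ B i, ∑ a : Bool, ∑ b : Bool, sgn a * sgn b *
          ((bexp p (fun z => μ i (Function.update z i a)) - mubar a)
            * (bexp p (fun z => μ j (Function.update z j b)) - mubar b))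
        = (1 / N) * ∑ i, (τ i - τbar) * ∑ j ∈ B i, (τ j - τbar))
    ∧ ((1 / N) * ∑ i, (τ i - τbar) * ∑ j ∈ B i, (τ j - τbar) ≥ 0 →
        ∑ i, ∑ j ∈ B i, ∑ a : Bool, ∑ b : Bool, sgn a * sgn b *
            bcov p (fun z => μ i (Function.update z i a))
              (fun z => μ j (Function.update z j b))
          ≤ ∑ i, ∑ j ∈ B i, ∑ a : Bool, ∑ b : Bool, sgn a * sgn b *
              bexp p (fun z =>
                (μ i (Function.update z i a) - mubar a)
                  * (μ j (Function.update z j b) - mubar b))) := by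
  have hmubar_sub : mubar true - mubar false = τbar := by
    simp only [hmubar, hτbar, hτ, ← mul_sub, ← sum_sub_distrib]
  have hcentred : ∀ i j : Fin N,
      ∑ a : Bool, ∑ b : Bool, sgn a * sgn b *
          ((bexp p (fun z => μ i (Function.update z i a)) - mubar a)
            * (bexp p (fun z => μ j (Function.update z j b)) - mubar b))
        = (τ i - τbar) * (τ j - τbar) := by
    intro i j
    rw [sum_sgn_mul_sgn_mul, hτ i, hτ j, ← hmubar_sub]
    ring
  have hsplit : ∀ i j : Fin N,
      ∑ a : Bool, ∑ b : Bool, sgn a * sgn b *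
          bexp p (fun z => (μ i (Function.update z i a) - mubar a)
            * (μ j (Function.update z j b) - mubar b))
        = ∑ a : Bool, ∑ b : Bool, sgn a * sgn b *
            bcov p (fun z => μ i (Function.update z i a))
              (fun z => μ j (Function.update z j b))
          + (τ i - τbar) * (τ j - τbar) := by
    intro i j
    simp only [bexp_sub_mul_sub, mul_add, sum_add_distrib, hcentred]
  refine ⟨by simp only [hcentred, mul_sum], fun hhomophily => ?_⟩
  have hN' : (0 : ℝ) < N := by exact_mod_cast hN
  have hnonneg : 0 ≤ ∑ i, (τ i - τbar) * ∑ j ∈ B i, (τ j - τbar) := by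
    simpa [hN'] using hhomophily
  simp only [hsplit, sum_add_distrib, mul_sum] at hnonneg ⊢
  linarith

/-- Homophily identity and variance domination (Lemma 4). -/
theorem homophily_identity_and_domination
    (N : ℕ) (hN : 1 ≤ N) (p : ℝ) (hp0 : 0 < p) (hp1 : p < 1)
    (μ : Fin N → (Fin N → Bool) → ℝ) (B : Fin N → Finset (Fin N))
    (mubar : Bool → ℝ)
    (hmubar : ∀ a : Bool,
      mubar a = (1 / N) * ∑ i, bexp p (fun z => μ i (Function.update z i a)))
    (τ : Fin N → ℝ)
    (hτ : ∀ i, τ i = bexp p (fun z => μ i (Function.update z i true))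
        - bexp p (fun z => μ i (Function.update z i false)))
    (τbar : ℝ) (hτbar : τbar = (1 / N) * ∑ i, τ i) :
    ((1 / N) * ∑ i, ∑ j ∈ B i, ∑ a : Bool, ∑ b : Bool, sgn a * sgn b *
          ((bexp p (fun z => μ i (Function.update z i a)) - mubar a)
            * (bexp p (fun z => μ j (Function.update z j b)) - mubar b))
        = (1 / N) * ∑ i, (τ i - τbar) * ∑ j ∈ B i, (τ j - τbar))
    ∧ ((1 / N) * ∑ i, (τ i - τbar) * ∑ j ∈ B i, (τ j - τbar) ≥ 0 →
        ∑ i, ∑ j ∈ B i, ∑ a : Bool, ∑ b : Bool, sgn a * sgn b *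
            bcov p (fun z => μ i (Function.update z i a))
              (fun z => μ j (Function.update z j b))
          ≤ ∑ i, ∑ j ∈ B i, ∑ a : Bool, ∑ b : Bool, sgn a * sgn b *
              bexp p (fun z =>
                (μ i (Function.update z i a) - mubar a)
                  * (μ j (Function.update z j b) - mubar b))) :=
  homophily_identity_and_domination_general N hN p μ B mubar hmubar τ hτ τbar hτbar
end

section
/- Approximation bound C4.2: Given a dependency structure B, suppose |μ_i(z)| ≤ b for all i and z, and |B(i)| ≤ c̃ for all i. Suppose additionally that for all i, all j ∈ B(i) with j ≠ i, all a, b' ∈ {0,1}, and all k ∉ B(i) ∪ B(j), the function z ↦ μ_i(z[i:=a][j:=b']) does not depend on the k-th coordinate of z, and E[μ_i(Z[i:=a][j:=b']) μ_k^{(c)}(Z)] = E[μ_i(Z[i:=a][j:=b'])] E[μ_k^{(c)}(Z)] for all c ∈ {0,1}. Then | (1/N²) Σ_{i=1}^N Σ_{j∈B(i), j≠i} Σ_{k=1}^N ( E[μ_i(Z[i:=a][j:=b']) μ_k^{(c)}(Z)] − E[μ_i(Z[i:=a][j:=b'])] E[μ_k^{(c)}(Z)] ) | ≤ 4 c̃²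 b² / N for all a, b', c ∈ {0,1}. -/
/-- A dependency structure. -/
def DepStruct {N : ℕ} (p : ℝ) (μ : Fin N → (Fin N → Bool) → ℝ)
    (B : Fin N → Finset (Fin N)) : Prop :=
  (∀ i, i ∈ B i) ∧
  ∀ i j : Fin N, j ∉ B i →
    (∀ z : Fin N → Bool, μ i (Function.update z j false) = μ i (Function.update z j true)) ∧
    (∀ z : Fin N → Bool, μ j (Function.update z i false) = μ j (Function.update z i true)) ∧
    (∀ a b : Bool, bcov p (fun z => μ i (Function.update z i a))
        (fun z => μ j (Function.update z j b)) = 0)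

open Finset

lemma sum_prod_bernoulli_eq_one {ι : Type*} [Fintype ι] [DecidableEq ι] (p : ℝ) :
    ∑ z : ι → Bool, ∏ i, (if z i then p else 1 - p) = 1 := by
  rw [← Fintype.prod_sum (fun (_ : ι) (x : Bool) => if x then p else 1 - p)]
  simp

lemma abs_bexp_le {N : ℕ} {p : ℝ} (hp0 : 0 ≤ p) (hp1 : p ≤ 1)
    {f : (Fin N → Bool) → ℝ} {M : ℝ} (hf : ∀ z, |f z| ≤ M) : |bexp p f| ≤ M := by
  have hw : ∀ z : Fin N → Bool, 0 ≤ ∏ i, (if z i then p else 1 - p) := fun z =>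
    prod_nonneg fun i _ => by split <;> linarith
  calc |bexp p f| ≤ ∑ z : Fin N → Bool, |(∏ i, if z i then p else 1 - p) * f z| :=
        abs_sum_le_sum_abs _ _
    _ ≤ ∑ z : Fin N → Bool, (∏ i, if z i then p else 1 - p) * M := by
        gcongr with z
        rw [abs_mul, abs_of_nonneg (hw z)]
        exact mul_le_mul_of_nonneg_left (hf z) (hw z)
    _ = M := by rw [← sum_mul, sum_prod_bernoulli_eq_one, one_mul]

lemma abs_bcov_le {N : ℕ} {p : ℝ} (hp0 : 0 ≤ p) (hp1 : p ≤ 1)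
    {f g : (Fin N → Bool) → ℝ} {M : ℝ} (hf : ∀ z, |f z| ≤ M) (hg : ∀ z, |g z| ≤ M) :
    |bcov p f g| ≤ 2 * M ^ 2 := by
  have hM : 0 ≤ M := (abs_nonneg _).trans (hf fun _ => false)
  have hfg : ∀ z, |f z * g z| ≤ M ^ 2 := fun z => by
    rw [abs_mul, sq]; exact mul_le_mul (hf z) (hg z) (abs_nonneg _) hM
  have hprod : |bexp p f * bexp p g| ≤ M ^ 2 := by
    rw [abs_mul, sq]
    exact mul_le_mul (abs_bexp_le hp0 hp1 hf) (abs_bexp_le hp0 hp1 hg) (abs_nonneg _) hM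
  calc |bcov p f g| ≤ |bexp p (fun z => f z * g z)| + |bexp p f * bexp p g| := abs_sub _ _
    _ ≤ 2 * M ^ 2 := by linarith [abs_bexp_le hp0 hp1 hfg]

lemma abs_sum_le_card_mul {ι : Type*} {s : Finset ι} {f : ι → ℝ} {K : ℝ}
    (hf : ∀ i ∈ s, |f i| ≤ K) : |∑ i ∈ s, f i| ≤ #s * K :=
  (abs_sum_le_sum_abs _ _).trans (by simpa using sum_le_card_nsmul s _ K hf)

lemma abs_sum_le_card_mul_of_eq_zero {ι : Type*} [Fintype ι] {s : Finset ι} {f : ι → ℝ}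
    {K : ℝ} (hf : ∀ k ∈ s, |f k| ≤ K) (hzero : ∀ k ∉ s, f k = 0) :
    |∑ k, f k| ≤ #s * K := by
  rw [← sum_subset (subset_univ s) fun k _ hk => hzero k hk]
  exact abs_sum_le_card_mul hf

theorem abs_sum_sum_erase_sum_le {ι : Type*} [Fintype ι] [DecidableEq ι]
    (S : ι → Finset ι) (T : ι → ι → ι → ℝ) {c : ℕ} {K : ℝ}
    (hS : ∀ i, #(S i) ≤ c) (hT : ∀ i j k, |T i j k| ≤ K)
    (hzero : ∀ i, ∀ j ∈ (S i).erase i, ∀ k ∉ S i ∪ S j, T i j k = 0) :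
    |∑ i, ∑ j ∈ (S i).erase i, ∑ k, T i j k| ≤ Fintype.card ι * (c * (2 * c * K)) := by
  refine (abs_sum_le_card_mul (s := univ) fun i _ => ?_).trans_eq (by rw [card_univ])
  have hK : 0 ≤ K := (abs_nonneg _).trans (hT i i i)
  have hpair : ∀ j ∈ (S i).erase i, |∑ k, T i j k| ≤ 2 * c * K := fun j hj =>
    calc |∑ k, T i j k| ≤ #(S i ∪ S j) * K :=
          abs_sum_le_card_mul_of_eq_zero (fun k _ => hT i j k) (hzero i j hj)
      _ ≤ 2 * c * K := by
          gcongr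
          exact_mod_cast (card_union_le _ _).trans
            ((add_le_add (hS i) (hS j)).trans_eq (two_mul c).symm)
  calc |∑ j ∈ (S i).erase i, ∑ k, T i j k| ≤ #((S i).erase i) * (2 * c * K) :=
        abs_sum_le_card_mul hpair
    _ ≤ c * (2 * c * K) := by
        gcongr
        exact card_erase_le.trans (hS i)

theorem approx_bound_C42_general
    (N : ℕ) (p : ℝ) (hp0 : 0 < p) (hp1 : p < 1)
    (μ : Fin N → (Fin N → Bool) → ℝ) (B : Fin N → Finset (Fin N))
    (b : ℝ) (hb : ∀ i z, |μ i z| ≤ b)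
    (ctil : ℕ) (hc : ∀ i, (B i).card ≤ ctil)
    (hextra : ∀ i : Fin N, ∀ j ∈ B i, j ≠ i → ∀ a b' : Bool, ∀ k : Fin N,
      k ∉ B i ∪ B j →
        (∀ (z : Fin N → Bool) (v : Bool),
          μ i (Function.update (Function.update (Function.update z k v) i a) j b')
            = μ i (Function.update (Function.update z i a) j b')) ∧
        (∀ c : Bool,
          bexp p (fun z =>
              μ i (Function.update (Function.update z i a) j b')
                * μ k (Function.update z k c))
            = bexp p (fun z => μ i (Function.update (Function.update z i a) j b'))
              * bexp p (fun z => μ k (Function.update z k c)))) :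
    ∀ a b' c : Bool,
      |(1 / (N : ℝ) ^ 2) * ∑ i, ∑ j ∈ (B i).erase i, ∑ k,
          (bexp p (fun z =>
              μ i (Function.update (Function.update z i a) j b')
                * μ k (Function.update z k c))
            - bexp p (fun z => μ i (Function.update (Function.update z i a) j b'))
                * bexp p (fun z => μ k (Function.update z k c)))|
        ≤ 4 * ctil ^ 2 * b ^ 2 / N := by
  intro a b' c
  have hsum := abs_sum_sum_erase_sum_le B
    (fun i j k => bcov p (fun z => μ i (Function.update (Function.update z i a) j b'))
      (fun z => μ k (Function.update z k c)))
    hc (fun i j k => abs_bcov_le hp0.le hp1.le (fun _ => hb _ _) (fun _ => hb _ _))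
    (fun i j hj k hk => sub_eq_zero.mpr
      ((hextra i j (mem_of_mem_erase hj) (ne_of_mem_erase hj) a b' k hk).2 c))
  rw [Fintype.card_fin] at hsum
  rw [abs_mul, abs_of_nonneg (by positivity)]
  calc _ ≤ 1 / (N : ℝ) ^ 2 * (N * (ctil * (2 * ctil * (2 * b ^ 2)))) :=
        mul_le_mul_of_nonneg_left hsum (by positivity)
    _ = 4 * ctil ^ 2 * b ^ 2 / N := by
        rcases eq_or_ne (N : ℝ) 0 with hN | hN
        · simp [hN]
        · field_simp; ring

/-- Approximation bound C4.2: given a dependency structure with `|μ_i| ≤ b` and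
`|B(i)| ≤ c̃`, and assuming additionally that for all `i`, `j ∈ B(i)` with `j ≠ i`,
`a, b' ∈ {0,1}` and `k ∉ B(i) ∪ B(j)` the function `z ↦ μ_i(z[i:=a][j:=b'])` does not
depend on the `k`-th coordinate and `E[μ_i(Z[i:=a][j:=b']) μ_k^{(c)}(Z)]` factorizes,
then `|(1/N²) Σ_i Σ_{j∈B(i),j≠i} Σ_k (E[μ_i(Z[i:=a][j:=b']) μ_k^{(c)}(Z)]
  − E[μ_i(Z[i:=a][j:=b'])] E[μ_k^{(c)}(Z)])| ≤ 4 c̃² b²/N` for all `a, b', c ∈ {0,1}`. -/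
theorem approx_bound_C42
    (N : ℕ) (hN : 1 ≤ N) (p : ℝ) (hp0 : 0 < p) (hp1 : p < 1)
    (μ : Fin N → (Fin N → Bool) → ℝ) (B : Fin N → Finset (Fin N))
    (hB : DepStruct p μ B)
    (b : ℝ) (hb : ∀ i z, |μ i z| ≤ b)
    (ctil : ℕ) (hc : ∀ i, (B i).card ≤ ctil)
    (hextra : ∀ i : Fin N, ∀ j ∈ B i, j ≠ i → ∀ a b' : Bool, ∀ k : Fin N,
      k ∉ B i ∪ B j →
        (∀ (z : Fin N → Bool) (v : Bool),
          μ i (Function.update (Function.update (Function.update z k v) i a) j b')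
            = μ i (Function.update (Function.update z i a) j b')) ∧
        (∀ c : Bool,
          bexp p (fun z =>
              μ i (Function.update (Function.update z i a) j b')
                * μ k (Function.update z k c))
            = bexp p (fun z => μ i (Function.update (Function.update z i a) j b'))
              * bexp p (fun z => μ k (Function.update z k c)))) :
    ∀ a b' c : Bool,
      |(1 / (N : ℝ) ^ 2) * ∑ i, ∑ j ∈ (B i).erase i, ∑ k,
          (bexp p (fun z =>
              μ i (Function.update (Function.update z i a) j b')
                * μ k (Function.update z k c))
            - bexp p (fun z => μ i (Function.update (Function.update z i a) j b'))
                * bexp p (fun z => μ k (Function.update z k c)))|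
        ≤ 4 * ctil ^ 2 * b ^ 2 / N :=
  approx_bound_C42_general N p hp0 hp1 μ B b hb ctil hc hextra
end
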